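/- Let p be a prime and G a finite p-group. Then the following three statements are equivalent: (i) the enhanced power graph of G is cyclically separable; (ii) ∂(G) ≥ 3; (iii) one of the following holds: (a) p > 3 and G is non-cyclic, (b) p = 3 and G has at least two maximal cyclic subgroups of order greater than 3, (c) p = 2 and either G has at least two maximal cyclic subgroups of order greater than 4, or G has at least two maximal cyclic subgroups of order greater than 2 with trivial intersection. -/

import Mathlib

/-- The power graph of a group `G`: distinct `x, y` are adjacent iff one is a power
of the other. -/
def powerGraph (G : Type*) [Group G] : SimpleGraph G where
  Adj x y := x ≠ y ∧ (x ∈ Subgroup.zpowers y ∨ y ∈ Subgroup.zpowers x)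
  symm := ⟨fun _ _ h => ⟨h.1.symm, h.2.symm⟩⟩
  loopless := ⟨fun _ h => h.1 rfl⟩

/-- The enhanced power graph of a group `G`: distinct `x, y` are adjacent iff they
lie in a common cyclic subgroup. -/
def enhancedPowerGraph (G : Type*) [Group G] : SimpleGraph G where
  Adj x y := x ≠ y ∧ ∃ z : G, x ∈ Subgroup.zpowers z ∧ y ∈ Subgroup.zpowers z
  symm := ⟨fun _ _ h => ⟨h.1.symm, h.2.choose, h.2.choose_spec.2, h.2.choose_spec.1⟩⟩
  loopless := ⟨fun _ h => h.1 rfl⟩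

/-- A subgroup is a maximal cyclic subgroup if it is cyclic and not properly contained
in any other cyclic subgroup. -/
def IsMaximalCyclic {G : Type*} [Group G] (M : Subgroup G) : Prop :=
  (∃ x : G, M = Subgroup.zpowers x) ∧
    ∀ N : Subgroup G, (∃ y : G, N = Subgroup.zpowers y) → M ≤ N → M = N

/-- The difference number `∂(G)`: the maximum of
`min (|M \ N|, |N \ M|)` over pairs of maximal cyclic subgroups `M, N`. -/
noncomputable def diffNumber (G : Type*) [Group G] : ℕ :=
  sSup { n : ℕ | ∃ M N : Subgroup G, IsMaximalCyclic M ∧ IsMaximalCyclic N ∧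
    n = min (((M : Set G) \ (N : Set G)).ncard) (((N : Set G) \ (M : Set G)).ncard) }

/-- A graph has a cycle. -/
def HasCycle {V : Type*} (Γ : SimpleGraph V) : Prop :=
  ∃ (v : V) (w : Γ.Walk v v), w.IsCycle

/-- `S` is a cyclic vertex cutset of `Γ` if `Γ - S` is disconnected and at least two
of its connected components contain a cycle. -/
def IsCyclicVertexCutset {V : Type*} (Γ : SimpleGraph V) (S : Set V) : Prop :=
  ¬ (Γ.induce Sᶜ).Connected ∧
    ∃ u v : ↥Sᶜ, ¬ (Γ.induce Sᶜ).Reachable u v ∧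
      (∃ w : (Γ.induce Sᶜ).Walk u u, w.IsCycle) ∧
      (∃ w : (Γ.induce Sᶜ).Walk v v, w.IsCycle)

/-- A graph is cyclically separable if it has a cyclic vertex cutset. -/
def CyclicallySeparable {V : Type*} (Γ : SimpleGraph V) : Prop :=
  ∃ S : Set V, IsCyclicVertexCutset Γ S

/-- The cyclic vertex connectivity: the minimum cardinality of a cyclic vertex cutset,
`⊤ = ∞` if there is none. -/
noncomputable def cyclicVertexConnectivity {V : Type*} (Γ : SimpleGraph V) : ℕ∞ :=
  ⨅ S ∈ {S : Set V | IsCyclicVertexCutset Γ S}, (S.ncard : ℕ∞)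

/-- The vertex connectivity: the minimum number of vertices whose deletion results in a
disconnected or trivial graph. -/
noncomputable def vertexConnectivity {V : Type*} (Γ : SimpleGraph V) : ℕ :=
  sInf { n : ℕ | ∃ S : Set V, S.ncard = n ∧
    ((Sᶜ : Set V).Subsingleton ∨ ¬ (Γ.induce Sᶜ).Connected) }

/-!
In a `p`-group the cyclic subgroups of a cyclic group form a chain, so two elements are adjacent
in the enhanced power graph iff one is a power of the other. Hence no element of `M \ N` is
adjacent to an element of `N \ M`, and for distinct maximal cyclic subgroups
`|M \ N| = |M| - |M ⊓ N|` with `|M ⊓ N| * p ∣ |M|`; this turns (iii) into `∂(G) ≥ 3`. If `∂(G) ≥ 3`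
is witnessed by `M, N`, deleting everything outside `(M \ N) ∪ (N \ M)` leaves two cliques of size
at least three with no edge between them.

Conversely, a cyclic vertex cutset must delete `1`, which is adjacent to everything. For `p ≤ 3`
a cycle cannot consist of elements of order `p` only: the two neighbours `a, b` of such a vertex `u`
would make `1, u, a, b` four distinct elements of `⟨u⟩`. So each of the two cycles reaches an
element of order `> p`, and the maximal cyclic subgroups through these two elements are distinct.
For `p = 2`, if one of them, `M`, has order `4`, the two neighbours of its generator on the cycle
fill up `M \ {1}`, so `M` cannot meet the other subgroup nontrivially without joining the two
components.
-/

open Subgroup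

theorem IsCyclic.mem_zpowers_of_pow_orderOf_eq_one {C : Type*} [Group C] [Finite C] [IsCyclic C]
    {x y : C} (h : x ^ orderOf y = 1) : x ∈ zpowers y := by
  classical
  have := Fintype.ofFinite C
  let s : Finset C := {a | a ^ orderOf y = 1}
  have hsub : (zpowers y : Set C).toFinset ⊆ s := by
    intro a ha
    obtain ⟨k, rfl⟩ := mem_zpowers_iff.mp (Set.mem_toFinset.mp ha)
    simp only [s, Finset.mem_filter, Finset.mem_univ, true_and]
    rw [← zpow_natCast, ← zpow_mul, mul_comm, zpow_mul, zpow_natCast, pow_orderOf_eq_one, one_zpow]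
  have hcard : s.card ≤ (zpowers y : Set C).toFinset.card := by
    rw [Set.toFinset_card, ← Nat.card_eq_fintype_card, SetLike.coe_sort_coe, Nat.card_zpowers]
    exact IsCyclic.card_pow_eq_one_le (orderOf_pos y)
  rw [← SetLike.mem_coe, ← Set.mem_toFinset, Finset.eq_of_subset_of_card_le hsub hcard]
  simpa [s] using h

section Group

variable {G : Type*} [Group G]

theorem mem_zpowers_of_pow_orderOf_eq_one [Finite G] {x y z : G} (hx : x ∈ zpowers z)
    (hy : y ∈ zpowers z) (h : x ^ orderOf y = 1) : x ∈ zpowers y := by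
  have key := IsCyclic.mem_zpowers_of_pow_orderOf_eq_one (x := (⟨x, hx⟩ : zpowers z))
    (y := ⟨y, hy⟩) (by rw [orderOf_mk]; exact Subtype.ext h)
  simpa using (zpowers z).subtype.map_zpowers ⟨y, hy⟩ ▸ mem_map_of_mem (zpowers z).subtype key

theorem IsMaximalCyclic.eq_of_le {M N : Subgroup G} (hM : IsMaximalCyclic M)
    (hN : IsMaximalCyclic N) (h : M ≤ N) : M = N :=
  hM.2 N hN.1 h

theorem exists_isMaximalCyclic_mem [Finite G] (x : G) : ∃ M, IsMaximalCyclic M ∧ x ∈ M := by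
  obtain ⟨M, ⟨hMc, hxM⟩, hmax⟩ := Set.Finite.exists_maximalFor (id : Subgroup G → Subgroup G)
    {N : Subgroup G | (∃ y, N = zpowers y) ∧ x ∈ N} (Set.toFinite _)
    ⟨zpowers x, ⟨x, rfl⟩, mem_zpowers x⟩
  exact ⟨M, ⟨hMc, fun N hN hle => le_antisymm hle (hmax ⟨hN, hle hxM⟩ hle)⟩, hxM⟩

theorem exists_isMaximalCyclic_ne_of_not_isCyclic [Finite G] (h : ¬ IsCyclic G) :
    ∃ M N : Subgroup G, IsMaximalCyclic M ∧ IsMaximalCyclic N ∧ M ≠ N := by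
  obtain ⟨M, hM, -⟩ := exists_isMaximalCyclic_mem (1 : G)
  obtain ⟨g, rfl⟩ := hM.1
  obtain ⟨x, hx⟩ : ∃ x, x ∉ zpowers g := by
    by_contra! hall
    exact h ⟨g, hall⟩
  obtain ⟨N, hN, hxN⟩ := exists_isMaximalCyclic_mem x
  exact ⟨_, N, hM, hN, fun hMN => hx (hMN ▸ hxN)⟩

theorem ncard_sdiff_eq_card_sub_card_inf [Finite G] (M N : Subgroup G) :
    ((M : Set G) \ N).ncard = Nat.card M - Nat.card (M ⊓ N : Subgroup G) := by
  rw [← Set.sdiff_self_inter, ← coe_inf, Set.ncard_sdiff (by exact inf_le_left (b := N)),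
    ← Nat.card_coe_set_eq, ← Nat.card_coe_set_eq]
  rfl

theorem le_diffNumber_iff [Finite G] {k : ℕ} (hk : k ≠ 0) :
    k ≤ diffNumber G ↔ ∃ M N : Subgroup G, IsMaximalCyclic M ∧ IsMaximalCyclic N ∧
      k ≤ ((M : Set G) \ N).ncard ∧ k ≤ ((N : Set G) \ M).ncard := by
  set D := { n : ℕ | ∃ M N : Subgroup G, IsMaximalCyclic M ∧ IsMaximalCyclic N ∧
    n = min (((M : Set G) \ (N : Set G)).ncard) (((N : Set G) \ (M : Set G)).ncard) }
  have hbdd : BddAbove D := by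
    refine ⟨Nat.card G, ?_⟩
    rintro n ⟨M, N, -, -, rfl⟩
    exact (min_le_left _ _).trans
      ((Set.ncard_le_ncard (Set.subset_univ _)).trans_eq (Set.ncard_univ G))
  constructor
  · intro h
    have hD : D.Nonempty := Set.nonempty_iff_ne_empty.mpr fun hD => by
      rw [show diffNumber G = sSup D from rfl, hD, csSup_empty, bot_eq_zero] at h
      exact hk (Nat.le_zero.mp h)
    obtain ⟨n, ⟨M, N, hM, hN, rfl⟩, hn⟩ :=
      exists_lt_of_lt_csSup hD ((Nat.sub_one_lt hk).trans_le h)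
    exact ⟨M, N, hM, hN, by omega, by omega⟩
  · rintro ⟨M, N, hM, hN, hMN, hNM⟩
    exact (le_min hMN hNM).trans (le_csSup hbdd ⟨M, N, hM, hN, rfl⟩)

end Group

namespace SimpleGraph

variable {V : Type*} {Γ : SimpleGraph V}

theorem Walk.IsCycle.exists_adj_adj_ne {u : V} {w : Γ.Walk u u} (hw : w.IsCycle) :
    ∃ a b, a ≠ b ∧ Γ.Adj u a ∧ Γ.Adj u b ∧ a ∈ w.support ∧ b ∈ w.support :=
  ⟨w.snd, w.penultimate, hw.snd_ne_penultimate, w.adj_snd hw.not_nil,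
    (w.adj_penultimate hw.not_nil).symm, w.getVert_mem_support 1, w.getVert_mem_support _⟩

theorem exists_isCycle_of_adj_of_adj_of_adj {a b c : V} (hab : Γ.Adj a b) (hbc : Γ.Adj b c)
    (hca : Γ.Adj c a) : ∃ w : Γ.Walk a a, w.IsCycle :=
  ⟨.cons hab (.cons hbc (.cons hca .nil)), by
    simp [Walk.cons_isCycle_iff, hab.ne, hbc.ne, hca.ne, hab.ne.symm, hca.ne.symm]⟩

theorem Walk.mem_of_forall_adj_mem {A : Set V} (hA : ∀ a b, a ∈ A → Γ.Adj a b → b ∈ A)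
    {x y : V} (w : Γ.Walk x y) (hx : x ∈ A) : y ∈ A := by
  induction w with
  | nil => exact hx
  | cons h _ ih => exact ih (hA _ _ hx h)

theorem IsClique.exists_isCycle_induce {s T : Set V} (hs : Γ.IsClique s) (h3 : 3 ≤ s.ncard)
    (hsT : s ⊆ T) : ∃ (x : T) (w : (Γ.induce T).Walk x x), (x : V) ∈ s ∧ w.IsCycle := by
  obtain ⟨t, hts, ht⟩ := Set.exists_subset_card_eq h3
  obtain ⟨a, b, c, hab, hac, hbc, rfl⟩ := Set.ncard_eq_three.mp ht
  have ha : a ∈ s := hts (by simp)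
  have hb : b ∈ s := hts (by simp)
  have hc : c ∈ s := hts (by simp)
  obtain ⟨w, hw⟩ := exists_isCycle_of_adj_of_adj_of_adj (Γ := Γ.induce T)
    (a := ⟨a, hsT ha⟩) (b := ⟨b, hsT hb⟩) (c := ⟨c, hsT hc⟩)
    (hs ha hb hab) (hs hb hc hbc) (hs hc ha hac.symm)
  exact ⟨_, w, ha, hw⟩

theorem isCyclicVertexCutset_compl_union {A B : Set V} (hA : Γ.IsClique A) (hB : Γ.IsClique B)
    (hA3 : 3 ≤ A.ncard) (hB3 : 3 ≤ B.ncard) (hAB : ∀ a ∈ A, ∀ b ∈ B, ¬ Γ.Adj a b) :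
    IsCyclicVertexCutset Γ (A ∪ B)ᶜ := by
  obtain ⟨x, wx, hxA, hwx⟩ := hA.exists_isCycle_induce (T := (A ∪ B)ᶜᶜ) hA3
    (by rw [compl_compl]; exact Set.subset_union_left)
  obtain ⟨y, wy, hyB, hwy⟩ := hB.exists_isCycle_induce (T := (A ∪ B)ᶜᶜ) hB3
    (by rw [compl_compl]; exact Set.subset_union_right)
  have hA_closed (a b : ↥(A ∪ B)ᶜᶜ) (ha : (a : V) ∈ A)
      (hab : (Γ.induce (A ∪ B)ᶜᶜ).Adj a b) : (b : V) ∈ A := by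
    obtain hbA | hbB : (b : V) ∈ A ∪ B := by simpa only [compl_compl] using b.2
    exacts [hbA, absurd hab (hAB _ ha _ hbB)]
  have hxy : ¬ (Γ.induce (A ∪ B)ᶜᶜ).Reachable x y := fun ⟨w⟩ => by
    have hyA : (y : V) ∈ A :=
      w.mem_of_forall_adj_mem (A := {z : ↥(A ∪ B)ᶜᶜ | (z : V) ∈ A}) hA_closed hxA
    obtain ⟨a, haA, hay⟩ := Set.exists_ne_of_one_lt_ncard (by omega : 1 < A.ncard) (y : V)
    exact hAB a haA _ hyB (hA haA hyA hay)
  exact ⟨fun h => hxy (h.preconnected x y), x, y, hxy, ⟨wx, hwx⟩, ⟨wy, hwy⟩⟩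

end SimpleGraph

section EnhancedPowerGraph

variable {G : Type*} [Group G] {T : Set G}

theorem isClique_enhancedPowerGraph_zpowers (g : G) :
    (enhancedPowerGraph G).IsClique (zpowers g : Set G) :=
  fun _ hx _ hy hxy => ⟨hxy, g, hx, hy⟩

theorem reachable_induce_enhancedPowerGraph {t s : T} {g : G} (ht : (t : G) ∈ zpowers g)
    (hs : (s : G) ∈ zpowers g) : ((enhancedPowerGraph G).induce T).Reachable t s := by
  by_cases hts : t = s
  · exact hts ▸ .rfl
  · exact SimpleGraph.Adj.reachable (G := (enhancedPowerGraph G).induce T)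
      ⟨fun h => hts (Subtype.ext h), g, ht, hs⟩

theorem reachable_of_reachable_of_mem_zpowers {u v t s : T} {g : G}
    (hut : ((enhancedPowerGraph G).induce T).Reachable u t)
    (hvs : ((enhancedPowerGraph G).induce T).Reachable v s)
    (ht : (t : G) ∈ zpowers g) (hs : (s : G) ∈ zpowers g) :
    ((enhancedPowerGraph G).induce T).Reachable u v :=
  hut.trans ((reachable_induce_enhancedPowerGraph ht hs).trans hvs.symm)

theorem one_notMem_of_not_reachable {u v : T}
    (h : ¬ ((enhancedPowerGraph G).induce T).Reachable u v) : (1 : G) ∉ T := fun h1 =>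
  h ((reachable_induce_enhancedPowerGraph (mem_zpowers (u : G)) (s := ⟨1, h1⟩) (one_mem _)).trans
    (reachable_induce_enhancedPowerGraph (t := ⟨1, h1⟩) (one_mem _) (mem_zpowers (v : G))))

theorem ncard_one_self_adj_adj (h1 : (1 : G) ∉ T) {x a b : T} (hab : a ≠ b)
    (ha : ((enhancedPowerGraph G).induce T).Adj x a)
    (hb : ((enhancedPowerGraph G).induce T).Adj x b) :
    ({1, (x : G), (a : G), (b : G)} : Set G).ncard = 4 := by
  have h1x : ∀ y : T, 1 ≠ (y : G) := fun y hy => h1 (hy ▸ y.2)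
  have hxa : (x : G) ≠ a := Subtype.coe_injective.ne ha.ne
  have hxb : (x : G) ≠ b := Subtype.coe_injective.ne hb.ne
  rw [Set.ncard_insert_of_notMem (by simp [h1x]), Set.ncard_insert_of_notMem (by simp [hxa, hxb]),
    Set.ncard_pair (Subtype.coe_injective.ne hab)]

end EnhancedPowerGraph

/-- Condition (iii) of the classification. -/
def SeparabilityCriterion (p : ℕ) (G : Type*) [Group G] : Prop :=
  (3 < p ∧ ¬ IsCyclic G) ∨
  (p = 3 ∧ ∃ M N : Subgroup G, IsMaximalCyclic M ∧ IsMaximalCyclic N ∧ M ≠ N ∧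
    3 < Nat.card M ∧ 3 < Nat.card N) ∨
  (p = 2 ∧ ((∃ M N : Subgroup G, IsMaximalCyclic M ∧ IsMaximalCyclic N ∧ M ≠ N ∧
      4 < Nat.card M ∧ 4 < Nat.card N) ∨
    (∃ M N : Subgroup G, IsMaximalCyclic M ∧ IsMaximalCyclic N ∧ M ≠ N ∧
      2 < Nat.card M ∧ 2 < Nat.card N ∧ M ⊓ N = ⊥)))

namespace IsPGroup

variable {G : Type*} [Group G] [Finite G] {p : ℕ} [hp : Fact p.Prime]

theorem mem_zpowers_or_mem_zpowers (hG : IsPGroup p G) {x y z : G} (hx : x ∈ zpowers z)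
    (hy : y ∈ zpowers z) : x ∈ zpowers y ∨ y ∈ zpowers x := by
  obtain ⟨a, ha⟩ := iff_orderOf.mp hG x
  obtain ⟨b, hb⟩ := iff_orderOf.mp hG y
  rcases le_total a b with hab | hab
  · refine .inl (mem_zpowers_of_pow_orderOf_eq_one hx hy (orderOf_dvd_iff_pow_eq_one.mp ?_))
    rw [ha, hb]; exact pow_dvd_pow p hab
  · refine .inr (mem_zpowers_of_pow_orderOf_eq_one hy hx (orderOf_dvd_iff_pow_eq_one.mp ?_))
    rw [ha, hb]; exact pow_dvd_pow p hab

theorem enhancedPowerGraph_eq_powerGraph (hG : IsPGroup p G) :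
    enhancedPowerGraph G = powerGraph G := by
  ext x y
  refine and_congr_right fun _ => ⟨fun ⟨z, hx, hy⟩ => hG.mem_zpowers_or_mem_zpowers hx hy, ?_⟩
  rintro (h | h)
  exacts [⟨y, h, mem_zpowers y⟩, ⟨x, mem_zpowers x, h⟩]

theorem mem_zpowers_of_adj_of_orderOf_le (hG : IsPGroup p G) {x a : G}
    (h : (enhancedPowerGraph G).Adj x a) (hord : orderOf a ≤ orderOf x) : a ∈ zpowers x := by
  rw [hG.enhancedPowerGraph_eq_powerGraph] at h
  obtain ⟨-, hxa | hax⟩ := h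
  · rw [eq_of_le_of_card_ge (zpowers_le.mpr hxa) (by rwa [Nat.card_zpowers, Nat.card_zpowers])]
    exact mem_zpowers a
  · exact hax

theorem mem_zpowers_of_adj_of_isMaximalCyclic (hG : IsPGroup p G) {x a : G}
    (h : (enhancedPowerGraph G).Adj x a) (hx : IsMaximalCyclic (zpowers x)) : a ∈ zpowers x := by
  rw [hG.enhancedPowerGraph_eq_powerGraph] at h
  obtain ⟨-, hxa | hax⟩ := h
  · rw [hx.2 _ ⟨a, rfl⟩ (zpowers_le.mpr hxa)]
    exact mem_zpowers a
  · exact hax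

theorem card_mul_dvd_of_lt (hG : IsPGroup p G) {H K : Subgroup G} (h : H < K) :
    Nat.card H * p ∣ Nat.card K := by
  obtain ⟨a, ha⟩ := iff_card.mp (hG.to_subgroup H)
  obtain ⟨b, hb⟩ := iff_card.mp (hG.to_subgroup K)
  have hab : a ≤ b := by
    rw [← Nat.pow_dvd_pow_iff_le_right hp.out.one_lt, ← ha, ← hb]
    exact card_dvd_of_le h.le
  have hne : a ≠ b := by
    rintro rfl
    exact h.ne (eq_of_le_of_card_ge h.le (by rw [ha, hb]))
  rw [ha, hb, ← pow_succ]
  exact pow_dvd_pow p (by omega)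

theorem card_inf_mul_dvd (hG : IsPGroup p G) {M N : Subgroup G} (hM : IsMaximalCyclic M)
    (hN : IsMaximalCyclic N) (hMN : M ≠ N) : Nat.card (M ⊓ N : Subgroup G) * p ∣ Nat.card M :=
  hG.card_mul_dvd_of_lt (inf_lt_left.mpr fun h => hMN (hM.eq_of_le hN h))

theorem three_le_ncard_sdiff (hG : IsPGroup p G) {M N : Subgroup G} (hM : IsMaximalCyclic M)
    (hN : IsMaximalCyclic N) (hMN : M ≠ N)
    (h : 3 < p ∨ (p = 3 ∧ 3 < Nat.card M) ∨
      (p = 2 ∧ (4 < Nat.card M ∨ (2 < Nat.card M ∧ M ⊓ N = ⊥)))) :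
    3 ≤ ((M : Set G) \ N).ncard := by
  have hdvd := hG.card_inf_mul_dvd hM hN hMN
  have hd : 0 < Nat.card (M ⊓ N : Subgroup G) := Nat.card_pos
  have hle := Nat.le_of_dvd Nat.card_pos hdvd
  rw [ncard_sdiff_eq_card_sub_card_inf]
  rcases h with hp3 | ⟨rfl, hM3⟩ | ⟨rfl, hM4 | ⟨hM2, hbot⟩⟩
  · have := Nat.mul_le_mul_left (Nat.card (M ⊓ N : Subgroup G)) hp3
    omega
  · omega
  · omega
  · have h2 := dvd_of_mul_left_dvd hdvd
    rw [hbot, card_bot] at hle ⊢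
    omega

theorem three_le_diffNumber (hG : IsPGroup p G) (h : SeparabilityCriterion p G) :
    3 ≤ diffNumber G := by
  rw [le_diffNumber_iff three_ne_zero]
  rcases h with ⟨hp3, hnc⟩ | ⟨rfl, M, N, hM, hN, hMN, hM3, hN3⟩ |
    ⟨rfl, ⟨M, N, hM, hN, hMN, hM4, hN4⟩ | ⟨M, N, hM, hN, hMN, hM2, hN2, hbot⟩⟩
  · obtain ⟨M, N, hM, hN, hMN⟩ := exists_isMaximalCyclic_ne_of_not_isCyclic hnc
    exact ⟨M, N, hM, hN, hG.three_le_ncard_sdiff hM hN hMN (.inl hp3),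
      hG.three_le_ncard_sdiff hN hM hMN.symm (.inl hp3)⟩
  · exact ⟨M, N, hM, hN, hG.three_le_ncard_sdiff hM hN hMN (.inr (.inl ⟨rfl, hM3⟩)),
      hG.three_le_ncard_sdiff hN hM hMN.symm (.inr (.inl ⟨rfl, hN3⟩))⟩
  · exact ⟨M, N, hM, hN, hG.three_le_ncard_sdiff hM hN hMN (.inr (.inr ⟨rfl, .inl hM4⟩)),
      hG.three_le_ncard_sdiff hN hM hMN.symm (.inr (.inr ⟨rfl, .inl hN4⟩))⟩
  · exact ⟨M, N, hM, hN,
      hG.three_le_ncard_sdiff hM hN hMN (.inr (.inr ⟨rfl, .inr ⟨hM2, hbot⟩⟩)),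
      hG.three_le_ncard_sdiff hN hM hMN.symm
        (.inr (.inr ⟨rfl, .inr ⟨hN2, inf_comm M N ▸ hbot⟩⟩))⟩

theorem cyclicallySeparable_of_three_le_diffNumber (hG : IsPGroup p G) (h : 3 ≤ diffNumber G) :
    CyclicallySeparable (enhancedPowerGraph G) := by
  obtain ⟨M, N, ⟨⟨g, rfl⟩, -⟩, ⟨⟨g', rfl⟩, -⟩, hMN, hNM⟩ :=
    (le_diffNumber_iff three_ne_zero).mp h
  refine ⟨_, SimpleGraph.isCyclicVertexCutset_compl_union
    ((isClique_enhancedPowerGraph_zpowers g).subset Set.sdiff_subset)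
    ((isClique_enhancedPowerGraph_zpowers g').subset Set.sdiff_subset) hMN hNM ?_⟩
  rintro a ⟨haM, haN⟩ b ⟨hbN, hbM⟩ hab
  rw [hG.enhancedPowerGraph_eq_powerGraph] at hab
  obtain ⟨-, hab | hba⟩ := hab
  exacts [haN (zpowers_le.mpr hbN hab), hbM (zpowers_le.mpr haM hba)]

variable {T : Set G}

theorem exists_mem_support_lt_orderOf (hG : IsPGroup p G) (hp3 : p ≤ 3) (h1 : (1 : G) ∉ T)
    {u : T} {w : ((enhancedPowerGraph G).induce T).Walk u u} (hw : w.IsCycle) :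
    ∃ x ∈ w.support, p < orderOf (x : G) := by
  obtain ⟨a, b, hab, ha, hb, has, hbs⟩ := hw.exists_adj_adj_ne
  by_contra! hsmall
  have hu : p ≤ orderOf (u : G) :=
    Nat.le_of_dvd (orderOf_pos _) (hG.dvd_orderOf fun hu => h1 (hu ▸ u.2))
  have hsub : ({1, (u : G), (a : G), (b : G)} : Set G) ⊆ zpowers (u : G) := by
    simp only [Set.insert_subset_iff, Set.singleton_subset_iff, SetLike.mem_coe]
    exact ⟨one_mem _, mem_zpowers _,
      hG.mem_zpowers_of_adj_of_orderOf_le ha ((hsmall a has).trans hu),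
      hG.mem_zpowers_of_adj_of_orderOf_le hb ((hsmall b hbs).trans hu)⟩
  have h4 := Set.ncard_le_ncard hsub
  rw [ncard_one_self_adj_adj h1 hab ha hb, ← Nat.card_coe_set_eq, SetLike.coe_sort_coe,
    Nat.card_zpowers] at h4
  have := hsmall u w.start_mem_support
  omega

theorem exists_reachable_eq_of_card_le_four (hG : IsPGroup p G) (h1 : (1 : G) ∉ T) {u x : T}
    {w : ((enhancedPowerGraph G).induce T).Walk u u} (hw : w.IsCycle) (hx : x ∈ w.support)
    (hord : 2 < orderOf (x : G)) {M : Subgroup G} (hM : IsMaximalCyclic M) (hxM : (x : G) ∈ M)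
    (hcard : Nat.card M ≤ 4) {c : G} (hc : c ∈ M) (hc1 : c ≠ 1) :
    ∃ t : T, (t : G) = c ∧ ((enhancedPowerGraph G).induce T).Reachable u t := by
  classical
  have hxM' : zpowers (x : G) = M := eq_of_le_of_card_ge (zpowers_le.mpr hxM) <| by
    rw [Nat.card_zpowers,
      Nat.eq_of_dvd_of_lt_two_mul Nat.card_pos.ne' (M.orderOf_dvd_natCard hxM) (by omega)]
  obtain ⟨a, b, hab, ha, hb, -, -⟩ := (hw.rotate hx).exists_adj_adj_ne
  have hmax : IsMaximalCyclic (zpowers (x : G)) := hxM' ▸ hM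
  have hsub : ({1, (x : G), (a : G), (b : G)} : Set G) ⊆ M := by
    simp only [← hxM', Set.insert_subset_iff, Set.singleton_subset_iff, SetLike.mem_coe]
    exact ⟨one_mem _, mem_zpowers _, hG.mem_zpowers_of_adj_of_isMaximalCyclic ha hmax,
      hG.mem_zpowers_of_adj_of_isMaximalCyclic hb hmax⟩
  have heq := Set.eq_of_subset_of_ncard_le hsub <| by
    rwa [ncard_one_self_adj_adj h1 hab ha hb, ← Nat.card_coe_set_eq]
  have hux : ((enhancedPowerGraph G).induce T).Reachable u x := ⟨w.takeUntil x hx⟩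
  obtain rfl | rfl | rfl | rfl : c ∈ ({1, (x : G), (a : G), (b : G)} : Set G) := heq ▸ hc
  · exact absurd rfl hc1
  · exact ⟨x, rfl, hux⟩
  · exact ⟨a, rfl, hux.trans ha.reachable⟩
  · exact ⟨b, rfl, hux.trans hb.reachable⟩

theorem separabilityCriterion_of_cyclicallySeparable (hG : IsPGroup p G)
    (h : CyclicallySeparable (enhancedPowerGraph G)) : SeparabilityCriterion p G := by
  classical
  obtain ⟨S, -, u, v, huv, ⟨wu, hwu⟩, ⟨wv, hwv⟩⟩ := h
  have h1 := one_notMem_of_not_reachable huv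
  rcases lt_or_ge 3 p with hp3 | hp3
  · refine .inl ⟨hp3, fun hcyc => ?_⟩
    obtain ⟨g, hg⟩ := hcyc.exists_generator
    exact huv (reachable_of_reachable_of_mem_zpowers .rfl .rfl (hg u) (hg v))
  obtain ⟨x, hxu, hx⟩ := hG.exists_mem_support_lt_orderOf hp3 h1 hwu
  obtain ⟨y, hyv, hy⟩ := hG.exists_mem_support_lt_orderOf hp3 h1 hwv
  have hux : ((enhancedPowerGraph G).induce Sᶜ).Reachable u x := ⟨wu.takeUntil x hxu⟩
  have hvy : ((enhancedPowerGraph G).induce Sᶜ).Reachable v y := ⟨wv.takeUntil y hyv⟩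
  obtain ⟨Mx, hMx, hxM⟩ := exists_isMaximalCyclic_mem (x : G)
  obtain ⟨My, hMy, hyM⟩ := exists_isMaximalCyclic_mem (y : G)
  obtain ⟨gx, rfl⟩ := hMx.1
  obtain ⟨gy, rfl⟩ := hMy.1
  have hMxy : zpowers gx ≠ zpowers gy := fun h =>
    huv (reachable_of_reachable_of_mem_zpowers hux hvy hxM (h ▸ hyM))
  have hxc := hx.trans_le (Nat.le_of_dvd Nat.card_pos ((zpowers gx).orderOf_dvd_natCard hxM))
  have hyc := hy.trans_le (Nat.le_of_dvd Nat.card_pos ((zpowers gy).orderOf_dvd_natCard hyM))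
  obtain rfl | rfl : p = 2 ∨ p = 3 := by have := hp.out.two_le; omega
  · refine .inr (.inr ⟨rfl, ?_⟩)
    by_cases hbot : zpowers gx ⊓ zpowers gy = ⊥
    · exact .inr ⟨_, _, hMx, hMy, hMxy, hxc, hyc, hbot⟩
    obtain ⟨⟨c, hcx, hcy⟩, hc1⟩ := ne_bot_iff_exists_ne_one.mp hbot
    replace hc1 : c ≠ 1 := fun h => hc1 (Subtype.ext h)
    refine .inl ⟨_, _, hMx, hMy, hMxy, not_le.mp fun hle => ?_, not_le.mp fun hle => ?_⟩
    · obtain ⟨t, rfl, hut⟩ :=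
        hG.exists_reachable_eq_of_card_le_four h1 hwu hxu hx hMx hxM hle hcx hc1
      exact huv (reachable_of_reachable_of_mem_zpowers hut hvy hcy hyM)
    · obtain ⟨t, rfl, hvt⟩ :=
        hG.exists_reachable_eq_of_card_le_four h1 hwv hyv hy hMy hyM hle hcy hc1
      exact huv (reachable_of_reachable_of_mem_zpowers hux hvt hxM hcx)
  · exact .inr (.inl ⟨rfl, _, _, hMx, hMy, hMxy, hxc, hyc⟩)

end IsPGroup

/-- Theorem 1.1 for the enhanced power graph: characterization of finite p-groups
whose enhanced power graphs are cyclically separable. -/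
theorem enhanced_power_graph_cyclically_separable_tfae
    (p : ℕ) (hp : p.Prime) (G : Type*) [Group G] [Finite G] (hG : IsPGroup p G) :
    List.TFAE [
      CyclicallySeparable (enhancedPowerGraph G),
      3 ≤ diffNumber G,
      (3 < p ∧ ¬ IsCyclic G) ∨
      (p = 3 ∧ ∃ M N : Subgroup G, IsMaximalCyclic M ∧ IsMaximalCyclic N ∧ M ≠ N ∧
        3 < Nat.card M ∧ 3 < Nat.card N) ∨
      (p = 2 ∧ ((∃ M N : Subgroup G, IsMaximalCyclic M ∧ IsMaximalCyclic N ∧ M ≠ N ∧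
          4 < Nat.card M ∧ 4 < Nat.card N) ∨
        (∃ M N : Subgroup G, IsMaximalCyclic M ∧ IsMaximalCyclic N ∧ M ≠ N ∧
          2 < Nat.card M ∧ 2 < Nat.card N ∧ M ⊓ N = ⊥)))] := by
  have : Fact p.Prime := ⟨hp⟩
  tfae_have 1 → 3 := hG.separabilityCriterion_of_cyclicallySeparable
  tfae_have 3 → 2 := hG.three_le_diffNumber
  tfae_have 2 → 1 := hG.cyclicallySeparable_of_three_le_diffNumber
  tfae_finish
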